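/- Let p ≥ 5 be a prime and set n := 2^(p−1). Define rational numbers a_0, a_1, …, a_{n/4} recursively by a_0 = 2 and a_{j+1} = −((n² − (4j)²) / ((2j+2)·(2j+1))) · a_j for 0 ≤ j < n/4. Then 2^p − 1 is prime if and only if there exists an integer m such that, in the rational numbers, ∑_{j=0}^{n/4} a_j = (2^p − 1) · m. -/

import Mathlib

/-!
With `m = n / 4 = 2 ^ (p - 3)` the recurrence forces `a j = (C(m+j, 2j) + C(m+j-1, 2j)) (-16)^j`,
which is the coefficient of `t ^ j` in the Dickson polynomial `D_m(2 + t)`; so `∑ a j = D_m(-14)`.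
As `m` is even, `D_m(-14) = D_m(14) = D_m(D_2(4)) = D_{2m}(4)`, and `D_{2^i}(4)` is the Lucas–Lehmer
term `s i`. The claim is then the Lucas–Lehmer test `2^p - 1 ∣ s (p - 2)`.
-/

open Finset Polynomial

lemma Nat.choose_add_two_add_choose (n k : ℕ) :
    (n + 2).choose (k + 2) + n.choose (k + 2) = 2 * (n + 1).choose (k + 2) + n.choose k := by
  have h₁ : (n + 2).choose (k + 2) = (n + 1).choose (k + 1) + (n + 1).choose (k + 2) :=
    Nat.choose_succ_succ' _ _
  have h₂ : (n + 1).choose (k + 2) = n.choose (k + 1) + n.choose (k + 2) :=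
    Nat.choose_succ_succ' _ _
  have h₃ : (n + 1).choose (k + 1) = n.choose k + n.choose (k + 1) := Nat.choose_succ_succ' _ _
  omega

namespace Polynomial

/-- The coefficient of `t ^ j` in `(dickson 1 1 m).eval (2 + t)`. For `m = j = 0` the truncated
subtraction makes both summands `C(0, 0)`, matching `D_0 = 2`. -/
def dicksonCoeff (m j : ℕ) : ℕ := (m + j).choose (2 * j) + (m + j - 1).choose (2 * j)

@[simp]
lemma dicksonCoeff_zero_right (m : ℕ) : dicksonCoeff m 0 = 2 := by simp [dicksonCoeff]

lemma dicksonCoeff_eq_zero_of_lt {m j : ℕ} (h : m < j) : dicksonCoeff m j = 0 := by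
  simp only [dicksonCoeff, Nat.choose_eq_zero_of_lt (by omega : m + j < 2 * j),
    Nat.choose_eq_zero_of_lt (by omega : m + j - 1 < 2 * j)]

lemma dicksonCoeff_add_two (m j : ℕ) :
    dicksonCoeff (m + 2) (j + 1) + dicksonCoeff m (j + 1) =
      2 * dicksonCoeff (m + 1) (j + 1) + dicksonCoeff (m + 1) j := by
  have h₁ := Nat.choose_add_two_add_choose (m + j + 1) (2 * j)
  rw [show m + j + 1 + 1 = m + j + 2 by ring] at h₁
  have h₂ := Nat.choose_add_two_add_choose (m + j) (2 * j)
  unfold dicksonCoeff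
  rw [show m + 2 + (j + 1) - 1 = m + j + 2 by omega, show m + 2 + (j + 1) = m + j + 1 + 2 by omega,
    show m + 1 + (j + 1) - 1 = m + j + 1 by omega, show m + 1 + (j + 1) = m + j + 2 by omega,
    show m + (j + 1) - 1 = m + j by omega, show m + (j + 1) = m + j + 1 by omega,
    show m + 1 + j - 1 = m + j by omega, show m + 1 + j = m + j + 1 by omega,
    show 2 * (j + 1) = 2 * j + 2 by ring]
  omega

lemma dicksonCoeff_succ_mul (m j : ℕ) :
    dicksonCoeff m (j + 1) * ((2 * j + 2) * (2 * j + 1)) =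
      (m - j) * (m + j) * dicksonCoeff m j := by
  rcases lt_or_ge j m with hjm | hmj
  swap
  · rw [dicksonCoeff_eq_zero_of_lt (by omega), Nat.sub_eq_zero_of_le hmj]; simp
  obtain ⟨r, rfl⟩ : ∃ r, m = j + r + 1 := ⟨m - j - 1, by omega⟩
  have e₁ : (2 * j + r + 2).choose (2 * j + 2) * (2 * j + 2) =
      (2 * j + r + 2).choose (2 * j + 1) * (r + 1) := by
    simpa [show 2 * j + r + 2 - (2 * j + 1) = r + 1 by omega] using
      Nat.choose_succ_right_eq (2 * j + r + 2) (2 * j + 1)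
  have e₂ : (2 * j + r + 2).choose (2 * j + 1) * (2 * j + 1) =
      (2 * j + r + 2).choose (2 * j) * (r + 2) := by
    simpa [show 2 * j + r + 2 - 2 * j = r + 2 by omega] using
      Nat.choose_succ_right_eq (2 * j + r + 2) (2 * j)
  have e₃ : (2 * j + r + 1).choose (2 * j + 2) * (2 * j + 2) =
      (2 * j + r + 1).choose (2 * j + 1) * r := by
    simpa [show 2 * j + r + 1 - (2 * j + 1) = r by omega] using
      Nat.choose_succ_right_eq (2 * j + r + 1) (2 * j + 1)
  have e₄ : (2 * j + r + 1).choose (2 * j + 1) * (2 * j + 1) =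
      (2 * j + r + 1).choose (2 * j) * (r + 1) := by
    simpa [show 2 * j + r + 1 - 2 * j = r + 1 by omega] using
      Nat.choose_succ_right_eq (2 * j + r + 1) (2 * j)
  have e₅ : (2 * j + r + 1).choose (2 * j) * (2 * j + r + 2) =
      (2 * j + r + 2).choose (2 * j) * (r + 2) := by
    simpa [show 2 * j + r + 1 + 1 - 2 * j = r + 2 by omega] using
      Nat.choose_mul_succ_eq (2 * j + r + 1) (2 * j)
  have e₆ : (2 * j + r).choose (2 * j) * (2 * j + r + 1) =
      (2 * j + r + 1).choose (2 * j) * (r + 1) := by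
    simpa [show 2 * j + r + 1 - 2 * j = r + 1 by omega] using
      Nat.choose_mul_succ_eq (2 * j + r) (2 * j)
  unfold dicksonCoeff
  rw [show j + r + 1 + (j + 1) - 1 = 2 * j + r + 1 by omega,
    show j + r + 1 + (j + 1) = 2 * j + r + 2 by omega, show j + r + 1 + j - 1 = 2 * j + r by omega,
    show j + r + 1 + j = 2 * j + r + 1 by omega, show j + r + 1 - j = r + 1 by omega,
    show 2 * (j + 1) = 2 * j + 2 by ring]
  zify at e₁ e₂ e₃ e₄ e₅ e₆ ⊢
  linear_combination (2 * j + 1) * e₁ + (r + 1) * e₂ + (2 * j + 1) * e₃ + r * e₄ - (r + 1) * e₅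
    - (r + 1) * e₆

section CommRing

variable {R : Type*} [CommRing R]

lemma sum_range_dicksonCoeff_of_lt (t : R) {m N : ℕ} (h : m < N) :
    ∑ j ∈ range N, (dicksonCoeff m j : R) * t ^ j =
      ∑ j ∈ range (m + 1), (dicksonCoeff m j : R) * t ^ j := by
  refine (sum_subset (range_subset_range.2 h) fun j _ hjm => ?_).symm
  rw [dicksonCoeff_eq_zero_of_lt (by simpa using hjm), Nat.cast_zero, zero_mul]

lemma sum_range_dicksonCoeff_add_two (t : R) {m N : ℕ} (h : m + 1 < N) :
    ∑ j ∈ range (N + 1), (dicksonCoeff (m + 2) j : R) * t ^ j =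
      (2 + t) * ∑ j ∈ range (N + 1), (dicksonCoeff (m + 1) j : R) * t ^ j -
        ∑ j ∈ range (N + 1), (dicksonCoeff m j : R) * t ^ j := by
  have hshift : t * ∑ j ∈ range (N + 1), (dicksonCoeff (m + 1) j : R) * t ^ j =
      ∑ i ∈ range N, (dicksonCoeff (m + 1) i : R) * t ^ (i + 1) := by
    rw [sum_range_succ, dicksonCoeff_eq_zero_of_lt h, Nat.cast_zero, zero_mul, add_zero, mul_sum]
    exact sum_congr rfl fun i _ => by ring
  have hcoeff : ∀ i, (dicksonCoeff (m + 2) (i + 1) : R) =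
      2 * dicksonCoeff (m + 1) (i + 1) + dicksonCoeff (m + 1) i - dicksonCoeff m (i + 1) := by
    intro i
    have h := congrArg (Nat.cast : ℕ → R) (dicksonCoeff_add_two m i)
    push_cast at h
    linear_combination h
  have hsum : ∑ i ∈ range N, (dicksonCoeff (m + 2) (i + 1) : R) * t ^ (i + 1) =
      2 * ∑ i ∈ range N, (dicksonCoeff (m + 1) (i + 1) : R) * t ^ (i + 1) +
        ∑ i ∈ range N, (dicksonCoeff (m + 1) i : R) * t ^ (i + 1) -
          ∑ i ∈ range N, (dicksonCoeff m (i + 1) : R) * t ^ (i + 1) := by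
    rw [mul_sum, ← sum_add_distrib, ← sum_sub_distrib]
    exact sum_congr rfl fun i _ => by rw [hcoeff]; ring
  rw [add_mul, hshift]
  simp only [sum_range_succ' _ N, hsum, dicksonCoeff_zero_right]
  ring

theorem dickson_one_one_eval_two_add (t : R) :
    ∀ m N : ℕ, m < N →
      (dickson 1 (1 : R) m).eval (2 + t) = ∑ j ∈ range N, (dicksonCoeff m j : R) * t ^ j
  | 0, N, h => by
    rw [sum_range_dicksonCoeff_of_lt t h]
    norm_num
  | 1, N, h => by
    rw [sum_range_dicksonCoeff_of_lt t h]
    norm_num [sum_range_succ, dicksonCoeff, add_comm]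
  | m + 2, N + 1, h => by
    rw [dickson_add_two, eval_sub, eval_mul, eval_X, eval_mul, eval_C, one_mul,
      dickson_one_one_eval_two_add t (m + 1) (N + 1) (by omega),
      dickson_one_one_eval_two_add t m (N + 1) (by omega),
      sum_range_dicksonCoeff_add_two t (by omega)]

lemma dickson_one_one_eval_neg_of_even (x : R) {n : ℕ} (hn : Even n) :
    (dickson 1 (1 : R) n).eval (-x) = (dickson 1 (1 : R) n).eval x := by
  obtain ⟨k, rfl⟩ := hn
  simp [← two_mul, mul_comm 2 k, dickson_one_one_mul]

end CommRing

end Polynomial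

theorem eq_dicksonCoeff_mul_of_rec {K : Type*} [Field K] [CharZero K] (m : ℕ) (a : ℕ → K)
    (ha0 : a 0 = 2)
    (harec : ∀ j < m, a (j + 1) =
      -(((4 * m : K) ^ 2 - (4 * j) ^ 2) / ((2 * j + 2) * (2 * j + 1))) * a j) :
    ∀ j ≤ m, a j = dicksonCoeff m j * (-16) ^ j
  | 0, _ => by simp [ha0]
  | j + 1, hj => by
    have hcoeff := congrArg (Nat.cast : ℕ → K) (dicksonCoeff_succ_mul m j)
    push_cast [Nat.cast_sub (by omega : j ≤ m)] at hcoeff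
    have hden : (2 * j + 2) * (2 * j + 1) ≠ (0 : K) := by
      exact_mod_cast (by positivity : (2 * j + 2) * (2 * j + 1) ≠ 0)
    rw [harec j (by omega), eq_dicksonCoeff_mul_of_rec m a ha0 harec j (by omega),
      ← mul_div_cancel_right₀ (dicksonCoeff m (j + 1) : K) hden, hcoeff]
    ring

namespace LucasLehmer

lemma s_eq_dickson_eval (i : ℕ) : s i = (dickson 1 (1 : ℤ) (2 ^ i)).eval 4 := by
  induction i with
  | zero => simp [s]
  | succ i ih => simp [s, ih, pow_succ', dickson_one_one_mul]

lemma s_add_two_eq_dickson_eval (k : ℕ) :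
    s (k + 2) = (dickson 1 (1 : ℤ) (2 ^ (k + 1))).eval (-14) := by
  rw [dickson_one_one_eval_neg_of_even _ (Nat.even_pow.2 ⟨even_two, k.succ_ne_zero⟩),
    s_eq_dickson_eval, pow_succ _ (k + 1), dickson_one_one_mul, eval_comp]
  norm_num [dickson_two]

lemma lucasLehmerTest_iff_dvd {p : ℕ} (hp : 2 ≤ p) :
    LucasLehmerTest p ↔ (2 ^ p - 1 : ℤ) ∣ s (p - 2) := by
  obtain ⟨p, rfl⟩ := Nat.exists_eq_add_of_le' hp
  rw [LucasLehmerTest, lucasLehmerResidue, Nat.add_sub_cancel, sZMod_eq_s,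
    ZMod.intCast_zmod_eq_zero_iff_dvd, Int.coe_nat_two_pow_pred]

theorem mersenne_prime_iff_dvd_s {p : ℕ} (hp : 3 ≤ p) :
    (mersenne p).Prime ↔ (2 ^ p - 1 : ℤ) ∣ s (p - 2) := by
  rw [← lucasLehmerTest_iff_dvd (by omega)]
  exact ⟨lucas_lehmer_necessity p hp, lucas_lehmer_sufficiency p (by omega)⟩

end LucasLehmer

theorem mersenne_prime_iff_phi_sum_general (p : ℕ) (hp5 : 5 ≤ p)
    (n : ℕ) (hn : n = 2 ^ (p - 1)) (a : ℕ → ℚ)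
    (ha0 : a 0 = 2)
    (harec : ∀ j < n / 4,
      a (j + 1) =
        -(((n : ℚ) ^ 2 - (4 * (j : ℚ)) ^ 2) / ((2 * (j : ℚ) + 2) * (2 * (j : ℚ) + 1))) * a j) :
    Nat.Prime (2 ^ p - 1) ↔
      ∃ m : ℤ, (∑ j ∈ Finset.range (n / 4 + 1), a j) = ((2 : ℚ) ^ p - 1) * (m : ℚ) := by
  obtain ⟨k, rfl⟩ : ∃ k, p = k + 4 := ⟨p - 4, by omega⟩
  have hn4 : n = 4 * 2 ^ (k + 1) := by
    rw [hn, show k + 4 - 1 = k + 1 + 2 by omega, pow_add]; ring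
  have hquarter : n / 4 = 2 ^ (k + 1) := by omega
  have ha := eq_dicksonCoeff_mul_of_rec (2 ^ (k + 1)) a ha0 fun j hj => by
    rw [harec j (by omega), hn4]
    push_cast
    ring
  have hsum : ∑ j ∈ range (n / 4 + 1), a j = (LucasLehmer.s (k + 2) : ℚ) := by
    rw [hquarter, sum_congr rfl fun j hj => ha j (Nat.lt_add_one_iff.1 (mem_range.1 hj)),
      LucasLehmer.s_add_two_eq_dickson_eval, show (-14 : ℤ) = 2 + -16 by norm_num,
      dickson_one_one_eval_two_add (-16 : ℤ) _ _ (Nat.lt_add_one _)]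
    norm_num
  rw [hsum, ← mersenne, LucasLehmer.mersenne_prime_iff_dvd_s (by omega), dvd_def]
  refine exists_congr fun m => ?_
  exact_mod_cast Iff.rfl

/-- Lucas–Lehmer–Moustafa primality test for Mersenne numbers, Version 3. -/
theorem mersenne_prime_iff_phi_sum (p : ℕ) (hp : Nat.Prime p) (hp5 : 5 ≤ p)
    (n : ℕ) (hn : n = 2 ^ (p - 1)) (a : ℕ → ℚ)
    (ha0 : a 0 = 2)
    (harec : ∀ j < n / 4,
      a (j + 1) =
        -(((n : ℚ) ^ 2 - (4 * (j : ℚ)) ^ 2) / ((2 * (j : ℚ) + 2) * (2 * (j : ℚ) + 1))) * a j) :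
    Nat.Prime (2 ^ p - 1) ↔
      ∃ m : ℤ, (∑ j ∈ Finset.range (n / 4 + 1), a j) = ((2 : ℚ) ^ p - 1) * (m : ℚ) :=
  mersenne_prime_iff_phi_sum_general p hp5 n hn a ha0 harec
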